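/- arXiv:1510.06136 — 4 statements merged into one kernel-verified Lean document; each statement's English description precedes it below -/
import Mathlib

section
/- For every real α and every a ≠ 0, the triple (a, 0, 0) (structure constants of a metric on the Heisenberg group H(3)) is a fixed point of the RG-2 bracket flow system if and only if 3αa² = 8; in particular such a steady soliton exists exactly when α > 0, with a = ±√(8/(3α)). -/
noncomputable section

/-- `Q₁ = (a₂−a₃)² − 3a₁² + 2a₁a₂ + 2a₁a₃`. -/
def Q1 (a1 a2 a3 : ℝ) : ℝ := (a2 - a3) ^ 2 - 3 * a1 ^ 2 + 2 * a1 * a2 + 2 * a1 * a3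

/-- `Q₂ = (a₁−a₃)² − 3a₂² + 2a₂a₁ + 2a₂a₃`. -/
def Q2 (a1 a2 a3 : ℝ) : ℝ := (a1 - a3) ^ 2 - 3 * a2 ^ 2 + 2 * a2 * a1 + 2 * a2 * a3

/-- `Q₃ = (a₁−a₂)² − 3a₃² + 2a₃a₁ + 2a₃a₂`. -/
def Q3 (a1 a2 a3 : ℝ) : ℝ := (a1 - a2) ^ 2 - 3 * a3 ^ 2 + 2 * a3 * a1 + 2 * a3 * a2

/-- Right-hand side of the RG-2 bracket flow for `a₁`. -/
def F1 (α a1 a2 a3 : ℝ) : ℝ := (a1 / 2) * Q1 a1 a2 a3 * (1 + (α / 8) * Q1 a1 a2 a3)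

/-- Right-hand side of the RG-2 bracket flow for `a₂`. -/
def F2 (α a1 a2 a3 : ℝ) : ℝ := (a2 / 2) * Q2 a1 a2 a3 * (1 + (α / 8) * Q2 a1 a2 a3)

/-- Right-hand side of the RG-2 bracket flow for `a₃`. -/
def F3 (α a1 a2 a3 : ℝ) : ℝ := (a3 / 2) * Q3 a1 a2 a3 * (1 + (α / 8) * Q3 a1 a2 a3)

/-- A triple of structure constants is a fixed point of the RG-2 bracket flow
(a steady algebraic soliton of the two-loop renormalization group flow). -/
def IsFixedPoint (α a1 a2 a3 : ℝ) : Prop :=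
  F1 α a1 a2 a3 = 0 ∧ F2 α a1 a2 a3 = 0 ∧ F3 α a1 a2 a3 = 0

theorem F1_heisenberg (α a : ℝ) :
    F1 α a 0 0 = -(3 / 16) * a ^ 3 * (8 - 3 * α * a ^ 2) := by
  unfold F1 Q1
  ring

theorem isFixedPoint_heisenberg_iff (α a : ℝ) :
    IsFixedPoint α a 0 0 ↔ a = 0 ∨ 3 * α * a ^ 2 = 8 := by
  have hF2 : F2 α a 0 0 = 0 := by simp [F2]
  have hF3 : F3 α a 0 0 = 0 := by simp [F3]
  simp only [IsFixedPoint, hF2, hF3, and_true, F1_heisenberg, mul_eq_zero,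
    pow_eq_zero_iff three_ne_zero, sub_eq_zero]
  norm_num [eq_comm]

theorem exists_mul_sq_eq_iff_pos {k c : ℝ} (hc : 0 < c) :
    (∃ a : ℝ, k * a ^ 2 = c) ↔ 0 < k := by
  constructor
  · rintro ⟨a, ha⟩
    exact pos_of_mul_pos_left (ha ▸ hc) (sq_nonneg a)
  · intro hk
    refine ⟨Real.sqrt (c / k), ?_⟩
    rw [Real.sq_sqrt (div_nonneg hc.le hk.le), mul_div_cancel₀ _ hk.ne']

theorem mul_sq_eq_iff_eq_sqrt_or_eq_neg_sqrt {k c a : ℝ} (hk : 0 < k) (hc : 0 ≤ c) :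
    k * a ^ 2 = c ↔ a = Real.sqrt (c / k) ∨ a = -Real.sqrt (c / k) := by
  rw [← sq_eq_sq_iff_eq_or_eq_neg, Real.sq_sqrt (div_nonneg hc hk.le), eq_div_iff hk.ne',
    mul_comm]

/-- for every `α` and `a ≠ 0`, the triple `(a,0,0)` (Heisenberg group `H(3)`)
is a fixed point of the RG-2 bracket flow iff `3αa² = 8`; in particular such a steady
soliton exists exactly when `α > 0`, with `a = ±√(8/(3α))`. -/
theorem stmt3 (α : ℝ) :
    (∀ a : ℝ, a ≠ 0 → (IsFixedPoint α a 0 0 ↔ 3 * α * a ^ 2 = 8)) ∧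
    ((∃ a : ℝ, a ≠ 0 ∧ IsFixedPoint α a 0 0) ↔ 0 < α) ∧
    (0 < α → ∀ a : ℝ, a ≠ 0 →
      (IsFixedPoint α a 0 0 ↔
        a = Real.sqrt (8 / (3 * α)) ∨ a = -Real.sqrt (8 / (3 * α)))) := by
  have key : ∀ a : ℝ, a ≠ 0 → (IsFixedPoint α a 0 0 ↔ 3 * α * a ^ 2 = 8) := fun a ha => by
    rw [isFixedPoint_heisenberg_iff, or_iff_right ha]
  refine ⟨key, ?_, fun hα a ha => ?_⟩
  · calc (∃ a : ℝ, a ≠ 0 ∧ IsFixedPoint α a 0 0) ↔ ∃ a : ℝ, 3 * α * a ^ 2 = 8 := by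
          refine exists_congr fun a => ⟨fun ⟨ha, h⟩ => (key a ha).mp h, fun h => ?_⟩
          have ha : a ≠ 0 := by rintro rfl; norm_num at h
          exact ⟨ha, (key a ha).mpr h⟩
      _ ↔ 0 < 3 * α := exists_mul_sq_eq_iff_pos (by norm_num)
      _ ↔ 0 < α := mul_pos_iff_of_pos_left three_pos
  · rw [key a ha]
    exact mul_sq_eq_iff_eq_sqrt_or_eq_neg_sqrt (by positivity) (by norm_num)
end
end

section
/- For every α > 0, the triple (a₁,a₂,a₃) = (−3/(2√α), 0, 1/(2√α)) (structure constants of a metric on E(1,1)) is a fixed point of the RG-2 bracket flow system, i.e. F₁ = F₂ = F₃ = 0 at this triple; explicitly, Q₁ = −8/α and Q₃ = 0 there. -/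
noncomputable section

/-! The triple lies on the ray `(-3c, 0, c)` with `c = 1/(2√α)`. Along that ray `Q₃` vanishes
identically and `Q₁ = -32c² = -8/α`, which kills the two-loop factor `1 + (α/8)Q₁` of `F₁`;
`F₂` and `F₃` vanish because of their factors `a₂ = 0` and `Q₃ = 0`. -/

lemma Q1_neg_three_mul_zero (c : ℝ) : Q1 (-3 * c) 0 c = -32 * c ^ 2 := by
  unfold Q1; ring

lemma Q3_neg_three_mul_zero (c : ℝ) : Q3 (-3 * c) 0 c = 0 := by
  unfold Q3; ring

lemma F1_eq_zero_of_Q1_eq {α : ℝ} (hα : α ≠ 0) {a1 a2 a3 : ℝ} (h : Q1 a1 a2 a3 = -8 / α) :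
    F1 α a1 a2 a3 = 0 := by
  have h_factor : 1 + α / 8 * Q1 a1 a2 a3 = 0 := by
    rw [h]; field_simp; ring
  rw [F1, h_factor, mul_zero]

lemma isFixedPoint_of_Q1_eq_of_Q3_eq_zero {α : ℝ} (hα : α ≠ 0) {a1 a3 : ℝ}
    (h1 : Q1 a1 0 a3 = -8 / α) (h3 : Q3 a1 0 a3 = 0) : IsFixedPoint α a1 0 a3 :=
  ⟨F1_eq_zero_of_Q1_eq hα h1, by simp [F2], by simp [F3, h3]⟩

/-- for every `α > 0`, the triple `(−3/(2√α), 0, 1/(2√α))` on `E(1,1)` is a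
fixed point of the RG-2 bracket flow; explicitly `Q₁ = −8/α` and `Q₃ = 0` there. -/
theorem stmt9 (α : ℝ) (hα : 0 < α) :
    IsFixedPoint α (-3 / (2 * Real.sqrt α)) 0 (1 / (2 * Real.sqrt α)) ∧
    Q1 (-3 / (2 * Real.sqrt α)) 0 (1 / (2 * Real.sqrt α)) = -8 / α ∧
    Q3 (-3 / (2 * Real.sqrt α)) 0 (1 / (2 * Real.sqrt α)) = 0 := by
  set c := 1 / (2 * Real.sqrt α) with hc
  have ha1 : -3 / (2 * Real.sqrt α) = -3 * c := by rw [hc]; ring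
  have hc_sq : c ^ 2 = 1 / (4 * α) := by
    rw [hc, div_pow, mul_pow, Real.sq_sqrt hα.le]; norm_num
  have hQ1 : Q1 (-3 * c) 0 c = -8 / α := by
    rw [Q1_neg_three_mul_zero, hc_sq]; field_simp; ring
  rw [ha1]
  exact ⟨isFixedPoint_of_Q1_eq_of_Q3_eq_zero hα.ne' hQ1 (Q3_neg_three_mul_zero c), hQ1,
    Q3_neg_three_mul_zero c⟩

end
end

section
/- Classification of steady solitons of the form (a, 0, c·a): for every real α, every a ≠ 0 and every c ∈ ℝ, the triple (a, 0, c·a) is a fixed point of the RG-2 bracket flow system if and only if c = 1, or (c = 0 and 3αa² = 8), or (c = −1 and αa² = 2), or (c = −3 and 4αa² = 1), or (c = −1/3 and 4αa² = 9). -/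
/-!
Each `F_i` vanishes iff `a_i = 0`, `Q_i = 0` or `α Q_i = -8`. Along `(a, 0, c a)` the equation
for `a₂` is void, `Q₁ = a² (c - 1)(c + 3)` and `Q₃ = -a² (c - 1)(3c + 1)`, so everything reduces
to a case analysis in `c` and `t = α a²`. When both `αQ₁ = -8` and `αQ₃ = -8`, adding the two
equations gives `t (c - 1)(c + 1) = 0`, which forces `c = -1`.
-/

noncomputable section

lemma half_mul_mul_one_add_eq_zero_iff {K : Type*} [Field K] [CharZero K] {x q α : K} :
    x / 2 * q * (1 + α / 8 * q) = 0 ↔ x = 0 ∨ q = 0 ∨ α * q = -8 := by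
  have h8 : 1 + α / 8 * q = 0 ↔ α * q = -8 :=
    ⟨fun h ↦ by linear_combination 8 * h, fun h ↦ by linear_combination h / 8⟩
  simp only [mul_eq_zero, div_eq_zero_iff, two_ne_zero, or_false, h8, or_assoc]

lemma F1_eq_zero_iff {α a1 a2 a3 : ℝ} :
    F1 α a1 a2 a3 = 0 ↔ a1 = 0 ∨ Q1 a1 a2 a3 = 0 ∨ α * Q1 a1 a2 a3 = -8 :=
  half_mul_mul_one_add_eq_zero_iff

lemma F2_eq_zero_iff {α a1 a2 a3 : ℝ} :
    F2 α a1 a2 a3 = 0 ↔ a2 = 0 ∨ Q2 a1 a2 a3 = 0 ∨ α * Q2 a1 a2 a3 = -8 :=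
  half_mul_mul_one_add_eq_zero_iff

lemma F3_eq_zero_iff {α a1 a2 a3 : ℝ} :
    F3 α a1 a2 a3 = 0 ↔ a3 = 0 ∨ Q3 a1 a2 a3 = 0 ∨ α * Q3 a1 a2 a3 = -8 :=
  half_mul_mul_one_add_eq_zero_iff

lemma Q1_a_zero_ca (a c : ℝ) : Q1 a 0 (c * a) = a ^ 2 * ((c - 1) * (c + 3)) := by
  unfold Q1; ring

lemma Q3_a_zero_ca (a c : ℝ) : Q3 a 0 (c * a) = -(a ^ 2 * ((c - 1) * (3 * c + 1))) := by
  unfold Q3; ring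

lemma isFixedPoint_a_zero_ca_iff {α a c : ℝ} (ha : a ≠ 0) :
    IsFixedPoint α a 0 (c * a) ↔
      ((c - 1) * (c + 3) = 0 ∨ α * a ^ 2 * ((c - 1) * (c + 3)) = -8) ∧
      (c = 0 ∨ (c - 1) * (3 * c + 1) = 0 ∨ α * a ^ 2 * ((c - 1) * (3 * c + 1)) = 8) := by
  have ha2 : a ^ 2 ≠ 0 := pow_ne_zero 2 ha
  have hassoc (p r : ℝ) : α * (a ^ 2 * p) = r ↔ α * a ^ 2 * p = r := by rw [mul_assoc]
  have hneg (p : ℝ) : α * -(a ^ 2 * p) = -8 ↔ α * a ^ 2 * p = 8 :=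
    ⟨fun h ↦ by linear_combination -h, fun h ↦ by linear_combination -h⟩
  simp only [IsFixedPoint, F1_eq_zero_iff, F2_eq_zero_iff, F3_eq_zero_iff, Q1_a_zero_ca,
    Q3_a_zero_ca, ha, mul_eq_zero_iff_left ha2, mul_eq_zero_iff_right ha, neg_eq_zero, hassoc,
    hneg, true_or, true_and, false_or]

lemma steady_system_iff (c t : ℝ) :
    (((c - 1) * (c + 3) = 0 ∨ t * ((c - 1) * (c + 3)) = -8) ∧
      (c = 0 ∨ (c - 1) * (3 * c + 1) = 0 ∨ t * ((c - 1) * (3 * c + 1)) = 8)) ↔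
      c = 1 ∨ (c = 0 ∧ 3 * t = 8) ∨ (c = -1 ∧ t = 2) ∨
      (c = -3 ∧ 4 * t = 1) ∨ (c = -(1 / 3) ∧ 4 * t = 9) := by
  constructor
  · rintro ⟨h1, h3⟩
    by_cases hc : c = 1
    · exact Or.inl hc
    have hc' : c - 1 ≠ 0 := sub_ne_zero.mpr hc
    have hp : (c - 1) * (c + 3) = 0 → c = -3 := fun h ↦
      eq_neg_of_add_eq_zero_left ((mul_eq_zero_iff_left hc').mp h)
    have hq : (c - 1) * (3 * c + 1) = 0 → c = -(1 / 3) := fun h ↦ by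
      linarith [(mul_eq_zero_iff_left hc').mp h]
    rcases h1 with h1 | h1 <;> rcases h3 with rfl | h3 | h3
    · norm_num at h1
    · linarith [hp h1, hq h3]
    · obtain rfl := hp h1
      exact Or.inr (Or.inr (Or.inr (Or.inl ⟨rfl, by linarith⟩)))
    · exact Or.inr (Or.inl ⟨rfl, by linarith⟩)
    · obtain rfl := hq h3
      exact Or.inr (Or.inr (Or.inr (Or.inr ⟨rfl, by linarith⟩)))
    · have ht : t ≠ 0 := by rintro rfl; norm_num at h1
      have hsum : t * (c - 1) * (c + 1) = 0 := by linear_combination (h1 + h3) / 4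
      obtain rfl : c = -1 := eq_neg_of_add_eq_zero_left
        ((mul_eq_zero_iff_left (mul_ne_zero ht hc')).mp hsum)
      exact Or.inr (Or.inr (Or.inl ⟨rfl, by linarith⟩))
  · rintro (rfl | ⟨rfl, ht⟩ | ⟨rfl, ht⟩ | ⟨rfl, ht⟩ | ⟨rfl, ht⟩) <;> norm_num <;> linarith

/-- classification of RG-2 steady solitons of the form `(a, 0, c·a)` with
`a ≠ 0`. -/
theorem stmt13 (α a c : ℝ) (ha : a ≠ 0) :
    IsFixedPoint α a 0 (c * a) ↔
      c = 1 ∨ (c = 0 ∧ 3 * α * a ^ 2 = 8) ∨ (c = -1 ∧ α * a ^ 2 = 2) ∨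
      (c = -3 ∧ 4 * α * a ^ 2 = 1) ∨ (c = -(1 / 3) ∧ 4 * α * a ^ 2 = 9) := by
  rw [isFixedPoint_a_zero_ca_iff ha, steady_system_iff]
  simp only [mul_assoc]
end
end

section
/- For every β ≠ 0 with 1 + 1/β ≥ 0, the four points (1, 1 + √(1+1/β)), (1, 1 − √(1+1/β)), (1 + √(1+1/β), 1) and (1 − √(1+1/β), 1) are fixed points of the planar system (7); moreover, for every β ≠ 0 the point (½(1 − 1/β), ½(1 − 1/β)) is a fixed point of system (7). -/
noncomputable section

/-- Right-hand side of system (7) for `m₂`. -/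
def G2 (β m2 m3 : ℝ) : ℝ :=
  m2 * (1 - m2) * (1 + m2 - m3) * (1 - β * (1 + m3 - m2) * (1 - m2 - m3))

/-- Right-hand side of system (7) for `m₃`. -/
def G3 (β m2 m3 : ℝ) : ℝ :=
  m3 * (1 - m3) * (1 + m3 - m2) * (1 - β * (1 + m2 - m3) * (1 - m2 - m3))

/-- A point `(m₂, m₃)` is a fixed point of the planar system (7). -/
def IsFixedPoint7 (β m2 m3 : ℝ) : Prop := G2 β m2 m3 = 0 ∧ G3 β m2 m3 = 0

/-! The system is symmetric under `m₂ ↔ m₃`. On the line `m₂ = 1` the field `G₂` vanishes and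
`G₃` vanishes where its last factor `1 + β m₃ (2 - m₃) = 1 + β (1 - (m₃ - 1)²)` does, i.e. at
`m₃ = 1 ± √(1 + 1/β)`. On the diagonal the last factor is `1 - β (1 - 2m)`, which vanishes at
`m = (1 - 1/β)/2`. -/

theorem G3_eq_G2_swap (β m2 m3 : ℝ) : G3 β m2 m3 = G2 β m3 m2 := by
  unfold G2 G3
  ring

theorem IsFixedPoint7.swap {β m2 m3 : ℝ} (h : IsFixedPoint7 β m2 m3) : IsFixedPoint7 β m3 m2 :=
  ⟨by rw [← G3_eq_G2_swap]; exact h.2, by rw [G3_eq_G2_swap]; exact h.1⟩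

theorem G2_one_left (β m3 : ℝ) : G2 β 1 m3 = 0 := by
  simp [G2]

theorem isFixedPoint7_one_add {β t : ℝ} (hβ : β ≠ 0) (ht : t ^ 2 = 1 + 1 / β) :
    IsFixedPoint7 β 1 (1 + t) := by
  refine ⟨G2_one_left β _, ?_⟩
  have hfactor : 1 - β * (1 + 1 - (1 + t)) * (1 - 1 - (1 + t)) = 0 := by
    field_simp at ht
    linear_combination -ht
  simp only [G3, hfactor, mul_zero]

theorem isFixedPoint7_diag {β m : ℝ} (h : β * (1 - 2 * m) = 1) : IsFixedPoint7 β m m := by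
  have hfactor : 1 - β * (1 + m - m) * (1 - m - m) = 0 := by linear_combination -h
  exact ⟨by simp only [G2, hfactor, mul_zero], by simp only [G3, hfactor, mul_zero]⟩

/-- for every `β ≠ 0` with `1 + 1/β ≥ 0`, the points `(1, 1 ± √(1+1/β))`
and `(1 ± √(1+1/β), 1)` are fixed points of system (7); moreover for every `β ≠ 0` the
point `(½(1−1/β), ½(1−1/β))` is a fixed point of system (7). -/
theorem stmt18 (β : ℝ) (hβ : β ≠ 0) :
    (1 + 1 / β ≥ 0 →
      IsFixedPoint7 β 1 (1 + Real.sqrt (1 + 1 / β)) ∧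
      IsFixedPoint7 β 1 (1 - Real.sqrt (1 + 1 / β)) ∧
      IsFixedPoint7 β (1 + Real.sqrt (1 + 1 / β)) 1 ∧
      IsFixedPoint7 β (1 - Real.sqrt (1 + 1 / β)) 1) ∧
    IsFixedPoint7 β ((1 - 1 / β) / 2) ((1 - 1 / β) / 2) := by
  refine ⟨fun hnonneg => ?_, isFixedPoint7_diag (by field_simp; ring)⟩
  have hsq : Real.sqrt (1 + 1 / β) ^ 2 = 1 + 1 / β := Real.sq_sqrt hnonneg
  have hplus := isFixedPoint7_one_add hβ hsq
  have hminus : IsFixedPoint7 β 1 (1 - Real.sqrt (1 + 1 / β)) := by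
    rw [sub_eq_add_neg]
    exact isFixedPoint7_one_add hβ (by rwa [neg_sq])
  exact ⟨hplus, hminus, hplus.swap, hminus.swap⟩
end
end
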